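/- Data refinement preserves security: if SK_A and SK_C are instances of the security model, SK_A satisfies SC_A ∧ LR_A, SK_A ⊑_{Ψ,Θ} SK_C, no concrete event is new (∀ e. Θ(e) ≠ τ), and the Δ-equivalence is trivial (∀ s t d. s ∼d∼_Δ t), then SK_C satisfies noninfluence. -/
import Mathlib


open scoped Classical

universe u v w

variable {S : Type u} {E : Type v} {D : Type w}

def run (φ : E → Set (S × S)) : List E → Set (S × S)
  | [] => {p | p.2 = p.1}
  | e :: es => {p | ∃ m, (p.1, m) ∈ φ e ∧ (m, p.2) ∈ run φ es}

def execution (φ : E → Set (S × S)) (s : S) (es : List E) : Set S :=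
  {t | (s, t) ∈ run φ es}

def reachable (φ : E → Set (S × S)) (s0 : S) (s : S) : Prop :=
  ∃ es, (s0, s) ∈ run φ es

def sources (φ : E → Set (S × S)) (kdom : S → E → D) (intf : D → D → Prop) :
    List E → S → D → Set D
  | [], _, d => {d}
  | e :: es, s, d =>
      {w | ∃ s', (s, s') ∈ φ e ∧ w ∈ sources φ kdom intf es s' d} ∪
      {w | w = kdom s e ∧
        ∃ v s', intf w v ∧ (s, s') ∈ φ e ∧ v ∈ sources φ kdom intf es s' d}

noncomputable def ipurge (φ : E → Set (S × S)) (kdom : S → E → D)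
    (intf : D → D → Prop) : List E → D → Set S → List E
  | [], _, _ => []
  | e :: es, d, ss =>
      if ∃ s ∈ ss, kdom s e ∈ sources φ kdom intf (e :: es) s d then
        e :: ipurge φ kdom intf es d {s' | ∃ s ∈ ss, (s, s') ∈ φ e}
      else ipurge φ kdom intf es d ss

/-- observational equivalence: (s ⊳ es1) ≃d≃ (t ⊳ es2) -/
def obseq (φ : E → Set (S × S)) (vpeq : S → D → S → Prop)
    (s : S) (es1 : List E) (d : D) (t : S) (es2 : List E) : Prop :=
  ∀ s' ∈ execution φ s es1, ∀ t' ∈ execution φ t es2, vpeq s' d t'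

/-- step consistent condition of event, with separate hypothesis/conclusion
equivalence relations (used for the Δ-restricted variants). -/
def SCe2 (φ : E → Set (S × S)) (kdom : S → E → D) (intf : D → D → Prop)
    (vpeqH vpeqCon : S → D → S → Prop) (sched : D) (s0 : S) (e : E) : Prop :=
  ∀ d s t, reachable φ s0 s → reachable φ s0 t → vpeqH s d t → vpeqH s sched t →
    intf (kdom s e) d → vpeqH s (kdom s e) t →
    ∀ s' t', (s, s') ∈ φ e → (t, t') ∈ φ e → vpeqCon s' d t'

/-- locally respects condition of event. -/
def LRe2 (φ : E → Set (S × S)) (kdom : S → E → D) (intf : D → D → Prop)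
    (vpeqCon : S → D → S → Prop) (s0 : S) (e : E) : Prop :=
  ∀ d s s', reachable φ s0 s → ¬ intf (kdom s e) d → (s, s') ∈ φ e →
    vpeqCon s d s'

def SCe (φ : E → Set (S × S)) (kdom : S → E → D) (intf : D → D → Prop)
    (vpeq : S → D → S → Prop) (sched : D) (s0 : S) (e : E) : Prop :=
  SCe2 φ kdom intf vpeq vpeq sched s0 e

def LRe (φ : E → Set (S × S)) (kdom : S → E → D) (intf : D → D → Prop)
    (vpeq : S → D → S → Prop) (s0 : S) (e : E) : Prop :=
  LRe2 φ kdom intf vpeq s0 e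

def noninfluence (φ : E → Set (S × S)) (kdom : S → E → D) (intf : D → D → Prop)
    (vpeq : S → D → S → Prop) (sched : D) (s0 : S) : Prop :=
  ∀ d es s t, reachable φ s0 s → reachable φ s0 t → vpeq s sched t →
    (∀ u ∈ sources φ kdom intf es s d, vpeq s u t) →
    obseq φ vpeq s es d t (ipurge φ kdom intf es d {t})

def weak_noninfluence (φ : E → Set (S × S)) (kdom : S → E → D)
    (intf : D → D → Prop) (vpeq : S → D → S → Prop) (sched : D) (s0 : S) : Prop :=
  ∀ d es1 es2 s t, reachable φ s0 s → reachable φ s0 t →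
    (∀ u ∈ sources φ kdom intf es1 s d, vpeq s u t) → vpeq s sched t →
    ipurge φ kdom intf es1 d {s} = ipurge φ kdom intf es2 d {t} →
    obseq φ vpeq s es1 d t es2

def nonleakage (φ : E → Set (S × S)) (kdom : S → E → D) (intf : D → D → Prop)
    (vpeq : S → D → S → Prop) (sched : D) (s0 : S) : Prop :=
  ∀ d es s t, reachable φ s0 s → reachable φ s0 t → vpeq s sched t →
    (∀ u ∈ sources φ kdom intf es s d, vpeq s u t) →
    obseq φ vpeq s es d t es

def noninterference_r (φ : E → Set (S × S)) (kdom : S → E → D)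
    (intf : D → D → Prop) (vpeq : S → D → S → Prop) (s0 : S) : Prop :=
  ∀ d es s, reachable φ s0 s →
    obseq φ vpeq s es d s (ipurge φ kdom intf es d {s})

def noninterference (φ : E → Set (S × S)) (kdom : S → E → D)
    (intf : D → D → Prop) (vpeq : S → D → S → Prop) (s0 : S) : Prop :=
  ∀ d es, obseq φ vpeq s0 es d s0 (ipurge φ kdom intf es d {s0})

def weak_noninterference_r (φ : E → Set (S × S)) (kdom : S → E → D)
    (intf : D → D → Prop) (vpeq : S → D → S → Prop) (s0 : S) : Prop :=
  ∀ d es1 es2 s, reachable φ s0 s →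
    ipurge φ kdom intf es1 d {s} = ipurge φ kdom intf es2 d {s} →
    obseq φ vpeq s es1 d s es2

def weak_noninterference (φ : E → Set (S × S)) (kdom : S → E → D)
    (intf : D → D → Prop) (vpeq : S → D → S → Prop) (s0 : S) : Prop :=
  ∀ d es1 es2,
    ipurge φ kdom intf es1 d {s0} = ipurge φ kdom intf es2 d {s0} →
    obseq φ vpeq s0 es1 d s0 es2


theorem mem_run_append {φ : E → Set (S × S)} :
    ∀ {xs ys : List E} {a c : S},
      (a, c) ∈ run φ (xs ++ ys) ↔ ∃ b, (a, b) ∈ run φ xs ∧ (b, c) ∈ run φ ys := by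
  intro xs
  induction xs with
  | nil => intro ys a c; simp [run]
  | cons x xs ih =>
      intro ys a c
      constructor
      · rintro ⟨m, h1, h2⟩
        obtain ⟨b, h3, h4⟩ := ih.mp h2
        exact ⟨b, ⟨m, h1, h3⟩, h4⟩
      · rintro ⟨b, ⟨m, h1, h3⟩, h4⟩
        exact ⟨m, h1, ih.mpr ⟨b, h3, h4⟩⟩

theorem reachable_step {φ : E → Set (S × S)} {s0 s s' : S} {e : E}
    (h : reachable φ s0 s) (hst : (s, s') ∈ φ e) : reachable φ s0 s' := by
  obtain ⟨es, hr⟩ := h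
  exact ⟨es ++ [e], mem_run_append.mpr ⟨s, hr, ⟨s', hst, rfl⟩⟩⟩

theorem unwinding_noninfluence
    (φ : E → Set (S × S)) (kdom : S → E → D) (intf : D → D → Prop)
    (vpeq : S → D → S → Prop) (sched : D) (s0 : S)
    (hequiv : ∀ d, Equivalence (fun s t => vpeq s d t))
    (hkdom : ∀ s t e, vpeq s sched t → kdom s e = kdom t e)
    (henabled : ∀ s e, reachable φ s0 s → ∃ s', (s, s') ∈ φ e)
    (hsched : ∀ d, intf sched d)
    (hsched' : ∀ d, intf d sched → d = sched)
    (hSC : ∀ e, SCe φ kdom intf vpeq sched s0 e)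
    (hLR : ∀ e, LRe φ kdom intf vpeq s0 e) :
    noninfluence φ kdom intf vpeq sched s0 := by
  -- any two sched-equivalent reachable states step to sched-equivalent states
  have sched_step : ∀ (e : E) (s u s' u' : S), reachable φ s0 s → reachable φ s0 u →
      vpeq s sched u → (s, s') ∈ φ e → (u, u') ∈ φ e → vpeq s' sched u' := by
    intro e s u s' u' hrs hru hsu hst hut
    by_cases hi : intf (kdom s e) sched
    · have hk : kdom s e = sched := hsched' _ hi
      exact hSC e sched s u hrs hru hsu hsu (hk ▸ hsched sched) (hk ▸ hsu) s' u' hst hut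
    · have h1 : vpeq s sched s' := hLR e sched s s' hrs hi hst
      have hi' : ¬ intf (kdom u e) sched := by rwa [← hkdom s u e hsu]
      have h2 : vpeq u sched u' := hLR e sched u u' hru hi' hut
      exact (hequiv sched).trans ((hequiv sched).trans ((hequiv sched).symm h1) hsu) h2
  -- d is always in its own sources at a reachable state
  have sources_refl : ∀ (es : List E) (d : D) (s : S), reachable φ s0 s →
      d ∈ sources φ kdom intf es s d := by
    intro es
    induction es with
    | nil => intro d s _; simp [sources]
    | cons e es ih =>
        intro d s hrs
        obtain ⟨s', hst⟩ := henabled s e hrs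
        exact Or.inl ⟨s', hst, ih d s' (reachable_step hrs hst)⟩
  -- sched-equivalent reachable states have the same sources
  have sources_sub : ∀ (es : List E) (d : D) (s u : S), reachable φ s0 s →
      reachable φ s0 u → vpeq s sched u →
      sources φ kdom intf es s d ⊆ sources φ kdom intf es u d := by
    intro es
    induction es with
    | nil => intro d s u _ _ _; exact fun w hw => hw
    | cons e es ih =>
        intro d s u hrs hru hsu w hw
        obtain ⟨u', hut⟩ := henabled u e hru
        rcases hw with ⟨s', hst, hw⟩ | ⟨hwk, v, s', hiv, hst, hv⟩
        · refine Or.inl ⟨u', hut, ?_⟩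
          exact ih d s' u' (reachable_step hrs hst) (reachable_step hru hut)
            (sched_step e s u s' u' hrs hru hsu hst hut) hw
        · refine Or.inr ⟨by rw [hwk]; exact hkdom s u e hsu, v, u', hiv, hut, ?_⟩
          exact ih d s' u' (reachable_step hrs hst) (reachable_step hru hut)
              (sched_step e s u s' u' hrs hru hsu hst hut) hv
  have sources_eq : ∀ (es : List E) (d : D) (s u : S), reachable φ s0 s →
      reachable φ s0 u → vpeq s sched u →
      sources φ kdom intf es s d = sources φ kdom intf es u d := by
    intro es d s u hrs hru hsu
    exact Set.Subset.antisymm (sources_sub es d s u hrs hru hsu)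
      (sources_sub es d u s hru hrs ((hequiv sched).symm hsu))
  -- main induction
  have main : ∀ (es : List E) (d : D) (s : S) (T : Set S), reachable φ s0 s →
      (∀ u ∈ T, reachable φ s0 u ∧ vpeq s sched u ∧
        ∀ w ∈ sources φ kdom intf es s d, vpeq s w u) →
      ∀ s' ∈ execution φ s es, ∀ t ∈ T,
        ∀ t' ∈ execution φ t (ipurge φ kdom intf es d T), vpeq s' d t' := by
    intro es
    induction es with
    | nil =>
        intro d s T hrs hinv s' hs' t ht t' ht'
        have h := (hinv t ht).2.2 d (by simp [sources])
        have hs'' : s' = s := hs'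
        have ht'' : t' = t := ht'
        rw [hs'', ht'']
        exact h
    | cons e es ih =>
        intro d s T hrs hinv s' hs' t ht t' ht'
        obtain ⟨sm, hst, hs2⟩ := hs'
        have hrsm : reachable φ s0 sm := reachable_step hrs hst
        by_cases hc : ∃ u ∈ T, kdom u e ∈ sources φ kdom intf (e :: es) u d
        · rw [show ipurge φ kdom intf (e :: es) d T
              = e :: ipurge φ kdom intf es d {s' | ∃ u ∈ T, (u, s') ∈ φ e} from by
                rw [ipurge, if_pos hc]] at ht'
          obtain ⟨tm, htt, ht2⟩ := ht'
          refine ih d sm {s' | ∃ u ∈ T, (u, s') ∈ φ e} hrsm ?_ s' hs2 tm ⟨t, ht, htt⟩ t' ht2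
          rintro u' ⟨u, hu, hut⟩
          obtain ⟨hru, hsu, hsrc⟩ := hinv u hu
          refine ⟨reachable_step hru hut, sched_step e s u sm u' hrs hru hsu hst hut, ?_⟩
          intro w hw
          have hw' : w ∈ sources φ kdom intf (e :: es) s d := Or.inl ⟨sm, hst, hw⟩
          have h1 : vpeq s w u := hsrc w hw'
          by_cases hi : intf (kdom s e) w
          · have hks : kdom s e ∈ sources φ kdom intf (e :: es) s d :=
              Or.inr ⟨rfl, w, sm, hi, hst, hw⟩
            exact hSC e w s u hrs hru h1 hsu hi (hsrc _ hks) sm u' hst hut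
          · have h2 : vpeq s w sm := hLR e w s sm hrs hi hst
            have hi' : ¬ intf (kdom u e) w := by rwa [← hkdom s u e hsu]
            have h3 : vpeq u w u' := hLR e w u u' hru hi' hut
            exact (hequiv w).trans ((hequiv w).trans ((hequiv w).symm h2) h1) h3
        · rw [show ipurge φ kdom intf (e :: es) d T = ipurge φ kdom intf es d T from by
              rw [ipurge, if_neg hc]] at ht'
          refine ih d sm T hrsm ?_ s' hs2 t ht t' ht'
          intro u hu
          obtain ⟨hru, hsu, hsrc⟩ := hinv u hu
          have hknotsched : ¬ intf (kdom s e) sched := by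
            intro hi
            have hk : kdom s e = sched := hsched' _ hi
            apply hc
            refine ⟨u, hu, ?_⟩
            obtain ⟨u', hut⟩ := henabled u e hru
            refine Or.inr ⟨rfl, d, u', ?_, hut, sources_refl es d u' (reachable_step hru hut)⟩
            rw [← hkdom s u e hsu, hk]
            exact hsched d
          have hssm : vpeq s sched sm := hLR e sched s sm hrs hknotsched hst
          refine ⟨hru, (hequiv sched).trans ((hequiv sched).symm hssm) hsu, ?_⟩
          intro w hw
          have hi : ¬ intf (kdom s e) w := by
            intro hi
            apply hc
            refine ⟨u, hu, ?_⟩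
            have hks : kdom s e ∈ sources φ kdom intf (e :: es) s d :=
              Or.inr ⟨rfl, w, sm, hi, hst, hw⟩
            rw [← hkdom s u e hsu, ← sources_eq (e :: es) d s u hrs hru hsu]
            exact hks
          have h2 : vpeq s w sm := hLR e w s sm hrs hi hst
          have h1 : vpeq s w u := hsrc w (Or.inl ⟨sm, hst, hw⟩)
          exact (hequiv w).trans ((hequiv w).symm h2) h1
  intro d es s t hrs hrt hsch hsrc
  intro s' hs' t' ht'
  exact main es d s {t} hrs (by rintro u rfl; exact ⟨hrt, hsch, hsrc⟩) s' hs' t rfl t' ht'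

/-- data refinement preserves security: if no concrete event is
new (∀ e, Θ(e) ≠ τ) and the Δ-equivalence is trivial, then SK_C satisfies
noninfluence. -/
theorem data_refinement_security {SA SC : Type u} {EA EC : Type v}
    (φA : EA → Set (SA × SA)) (φC : EC → Set (SC × SC))
    (s0A : SA) (s0C : SC) (Ψ : SC → SA) (Θ : EC → Option EA)
    (kdomA : SA → EA → D) (kdomC : SC → EC → D) (intf : D → D → Prop)
    (vpeqA : SA → D → SA → Prop) (vpeqC : SC → D → SC → Prop)
    (vpeqD : SC → D → SC → Prop) (sched : D)
    -- SK_A is an instance of the security model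
    (hequivA : ∀ d, Equivalence (fun s t => vpeqA s d t))
    (hkdomA : ∀ s t ea, vpeqA s sched t → kdomA s ea = kdomA t ea)
    (henabledA : ∀ s ea, reachable φA s0A s → ∃ s', (s, s') ∈ φA ea)
    -- SK_C is an instance of the security model
    (hequivC : ∀ d, Equivalence (fun s t => vpeqC s d t))
    (hkdomC : ∀ s t e, vpeqC s sched t → kdomC s e = kdomC t e)
    (henabledC : ∀ s e, reachable φC s0C s → ∃ s', (s, s') ∈ φC e)
    (hsched : ∀ d, intf sched d)
    (hsched' : ∀ d, intf d sched → d = sched)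
    -- refinement conditions SK_A ⊑_{Ψ,Θ} SK_C
    (hinit : Ψ s0C = s0A)
    (hsurj : ∀ ea, ∃ e, Θ e = some ea)
    (hsim : ∀ e ea s t, Θ e = some ea → (s, t) ∈ φC e →
      (Ψ s, Ψ t) ∈ φA ea)
    (hstutter : ∀ e s t, Θ e = none → (s, t) ∈ φC e → Ψ t = Ψ s)
    (hkdomR : ∀ e ea s, Θ e = some ea → kdomC s e = kdomA (Ψ s) ea)
    (hdecomp : ∀ s d t, vpeqC s d t ↔ (vpeqA (Ψ s) d (Ψ t) ∧ vpeqD s d t))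
    -- unwinding conditions of SK_A
    (hSCA : ∀ ea, SCe2 φA kdomA intf vpeqA vpeqA sched s0A ea)
    (hLRA : ∀ ea, LRe2 φA kdomA intf vpeqA s0A ea)
    -- pure data refinement: no new events, trivial Δ-equivalence
    (hnotau : ∀ e, Θ e ≠ none)
    (htriv : ∀ s d t, vpeqD s d t) :
    noninfluence φC kdomC intf vpeqC sched s0C := by
  -- transfer reachability to the abstract level
  have run_psi : ∀ (es : List EC) (s s' : SC), (s, s') ∈ run φC es →
      ∃ esa, (Ψ s, Ψ s') ∈ run φA esa := by
    intro es
    induction es with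
    | nil =>
        intro s s' h
        have : s' = s := h
        subst this
        exact ⟨[], rfl⟩
    | cons e es ih =>
        intro s s' h
        obtain ⟨m, h1, h2⟩ := h
        obtain ⟨esa, h3⟩ := ih m s' h2
        cases hΘ : Θ e with
        | none => exact absurd hΘ (hnotau e)
        | some ea => exact ⟨ea :: esa, Ψ m, hsim e ea s m hΘ h1, h3⟩
  have hreachA : ∀ s : SC, reachable φC s0C s → reachable φA s0A (Ψ s) := by
    intro s ⟨es, hr⟩
    obtain ⟨esa, h⟩ := run_psi es s0C s hr
    exact ⟨esa, hinit ▸ h⟩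
  have hSCC : ∀ e, SCe φC kdomC intf vpeqC sched s0C e := by
    intro e d s t hrs hrt h1 h2 hi h3 s' t' hst htt
    cases hΘ : Θ e with
    | none => exact absurd hΘ (hnotau e)
    | some ea =>
        have hk : kdomC s e = kdomA (Ψ s) ea := hkdomR e ea s hΘ
        refine (hdecomp s' d t').mpr ⟨?_, htriv _ _ _⟩
        refine hSCA ea d (Ψ s) (Ψ t) (hreachA s hrs) (hreachA t hrt)
          ((hdecomp s d t).mp h1).1 ((hdecomp s sched t).mp h2).1
          (by rw [← hk]; exact hi) ?_ (Ψ s') (Ψ t')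
          (hsim e ea s s' hΘ hst) (hsim e ea t t' hΘ htt)
        rw [← hk]
        exact ((hdecomp s (kdomC s e) t).mp h3).1
  have hLRC : ∀ e, LRe φC kdomC intf vpeqC s0C e := by
    intro e d s s' hrs hni hst
    cases hΘ : Θ e with
    | none => exact absurd hΘ (hnotau e)
    | some ea =>
        have hk : kdomC s e = kdomA (Ψ s) ea := hkdomR e ea s hΘ
        refine (hdecomp s d s').mpr ⟨?_, htriv _ _ _⟩
        exact hLRA ea d (Ψ s) (Ψ s') (hreachA s hrs) (by rw [← hk]; exact hni)
          (hsim e ea s s' hΘ hst)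
  exact unwinding_noninfluence φC kdomC intf vpeqC sched s0C hequivC hkdomC henabledC
    hsched hsched' hSCC hLRC
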